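/- Let Nl, Nh, dl, dh be finite index types, Kl : Matrix Nl Nl ℝ, Sl : Matrix dl dl ℝ, Kr : Matrix Nh Nh ℝ, Sr : Matrix dh dh ℝ invertible real matrices, and E : Matrix Nl Nh ℝ, W : Matrix dh dl ℝ arbitrary. Define Σ = fromBlocks (Kl ⊗ Sl) ((Kl * E) ⊗ (Sl * Wᵀ)) ((Eᵀ * Kl) ⊗ (W * Sl)) ((Eᵀ * Kl * E) ⊗ (W * Sl * Wᵀ) + Kr ⊗ Sr). For vectors yl : (Nl × dl) → ℝ and yr : (Nh × dh) → ℝ, let y : ((Nl × dl) ⊕ (Nh × dh)) → ℝ have first block yl and second block (Eᵀ ⊗ W).mulVec yl + yr. Then y ⬝ᵥ (Σ⁻¹.mulVec y) = yl ⬝ᵥ ((Kl⁻¹ ⊗ Sl⁻¹).mulVec yl) + yr ⬝ᵥ ((Kr⁻¹ ⊗ Sr⁻¹).mulVec yr). -/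

import Mathlib

/-! With the unit lower-triangular `L = fromBlocks 1 0 (Eᵀ ⊗ₖ W) 1`, the covariance factors as
`L * fromBlocks (Kl ⊗ₖ Sl) 0 0 (Kr ⊗ₖ Sr) * Lᵀ` and the data vector is `L *ᵥ Sum.elim yl yr`.
Since `L` is invertible, the `L` factors cancel in the quadratic form of the inverse, leaving
that of a block-diagonal matrix, whose inverse is computed blockwise. -/

open Matrix Kronecker

namespace Matrix

variable {R : Type*} [CommRing R] {m n : Type*} [Fintype m] [Fintype n] [DecidableEq m]
  [DecidableEq n]

theorem mulVec_dotProduct_inv_mul_mul_transpose_mulVec {L : Matrix n n R} (hL : IsUnit L.det)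
    (D : Matrix n n R) (v : n → R) :
    L *ᵥ v ⬝ᵥ (L * D * Lᵀ)⁻¹ *ᵥ (L *ᵥ v) = v ⬝ᵥ D⁻¹ *ᵥ v := by
  rw [mul_inv_rev, mul_inv_rev, mulVec_mulVec, Matrix.mul_assoc, Matrix.mul_assoc,
    nonsing_inv_mul _ hL, Matrix.mul_one, dotProduct_comm, dotProduct_mulVec, ← mulVec_transpose,
    mulVec_mulVec, ← Matrix.mul_assoc, ← transpose_nonsing_inv, ← transpose_mul,
    nonsing_inv_mul _ hL, transpose_one, Matrix.one_mul, dotProduct_comm]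

theorem fromBlocks_eq_mul_fromBlocks_zero_zero_mul_transpose (A : Matrix m m R)
    (B : Matrix n m R) (C : Matrix n n R) :
    fromBlocks A (A * Bᵀ) (B * A) (B * A * Bᵀ + C) =
      fromBlocks 1 0 B 1 * fromBlocks A 0 0 C * (fromBlocks 1 0 B 1)ᵀ := by
  simp [fromBlocks_transpose, fromBlocks_multiply]

theorem inv_fromBlocks_zero_zero {A : Matrix m m R} {C : Matrix n n R} (hA : IsUnit A)
    (hC : IsUnit C) : (fromBlocks A 0 0 C)⁻¹ = fromBlocks A⁻¹ 0 0 C⁻¹ := by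
  simp [inv_fromBlocks_zero₁₂_of_isUnit_iff A 0 C (iff_of_true hA hC)]

theorem sumElim_dotProduct_inv_fromBlocks_mulVec {A : Matrix m m R} (B : Matrix n m R)
    {C : Matrix n n R} (hA : IsUnit A.det) (hC : IsUnit C.det) (x : m → R) (z : n → R) :
    Sum.elim x (B *ᵥ x + z) ⬝ᵥ
        (fromBlocks A (A * Bᵀ) (B * A) (B * A * Bᵀ + C))⁻¹ *ᵥ Sum.elim x (B *ᵥ x + z) =
      x ⬝ᵥ A⁻¹ *ᵥ x + z ⬝ᵥ C⁻¹ *ᵥ z := by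
  have hy : Sum.elim x (B *ᵥ x + z) = fromBlocks 1 0 B 1 *ᵥ Sum.elim x z := by
    simp [fromBlocks_mulVec]
  have hL : IsUnit (fromBlocks (1 : Matrix m m R) 0 B 1).det := by simp
  rw [hy, fromBlocks_eq_mul_fromBlocks_zero_zero_mul_transpose,
    mulVec_dotProduct_inv_mul_mul_transpose_mulVec hL,
    inv_fromBlocks_zero_zero ((isUnit_iff_isUnit_det A).2 hA) ((isUnit_iff_isUnit_det C).2 hC),
    fromBlocks_mulVec, sumElim_dotProduct_sumElim]
  simp

theorem isUnit_det_kronecker {A : Matrix m m R} {B : Matrix n n R} (hA : IsUnit A.det)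
    (hB : IsUnit B.det) : IsUnit (A ⊗ₖ B).det := by
  rw [det_kronecker]
  exact (hA.pow _).mul (hB.pow _)

end Matrix

theorem gar_quadratic_form_decomposition {Nl Nh dl dh : Type*}
    [Fintype Nl] [Fintype Nh] [Fintype dl] [Fintype dh]
    [DecidableEq Nl] [DecidableEq Nh] [DecidableEq dl] [DecidableEq dh]
    (Kl : Matrix Nl Nl ℝ) (Sl : Matrix dl dl ℝ)
    (Kr : Matrix Nh Nh ℝ) (Sr : Matrix dh dh ℝ)
    (E : Matrix Nl Nh ℝ) (W : Matrix dh dl ℝ)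
    (hKl : IsUnit Kl.det) (hSl : IsUnit Sl.det)
    (hKr : IsUnit Kr.det) (hSr : IsUnit Sr.det)
    (yl : (Nl × dl) → ℝ) (yr : (Nh × dh) → ℝ) :
    let Cov : Matrix ((Nl × dl) ⊕ (Nh × dh)) ((Nl × dl) ⊕ (Nh × dh)) ℝ :=
      fromBlocks (Kl ⊗ₖ Sl) ((Kl * E) ⊗ₖ (Sl * Wᵀ)) ((Eᵀ * Kl) ⊗ₖ (W * Sl))
        ((Eᵀ * Kl * E) ⊗ₖ (W * Sl * Wᵀ) + Kr ⊗ₖ Sr)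
    let y : ((Nl × dl) ⊕ (Nh × dh)) → ℝ :=
      Sum.elim yl ((Eᵀ ⊗ₖ W).mulVec yl + yr)
    y ⬝ᵥ (Cov⁻¹.mulVec y) =
      yl ⬝ᵥ ((Kl⁻¹ ⊗ₖ Sl⁻¹).mulVec yl) + yr ⬝ᵥ ((Kr⁻¹ ⊗ₖ Sr⁻¹).mulVec yr) := by
  intro Cov y
  have hCov : Cov = fromBlocks (Kl ⊗ₖ Sl) ((Kl ⊗ₖ Sl) * (Eᵀ ⊗ₖ W)ᵀ) ((Eᵀ ⊗ₖ W) * (Kl ⊗ₖ Sl))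
      ((Eᵀ ⊗ₖ W) * (Kl ⊗ₖ Sl) * (Eᵀ ⊗ₖ W)ᵀ + Kr ⊗ₖ Sr) := by
    simp only [Cov, ← kroneckerMap_transpose, transpose_transpose, ← mul_kronecker_mul]
  rw [hCov, sumElim_dotProduct_inv_fromBlocks_mulVec _ (isUnit_det_kronecker hKl hSl)
    (isUnit_det_kronecker hKr hSr), inv_kronecker, inv_kronecker]
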